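/- Let p be prime, F a field, K a division subring of M_p(F) properly containing the scalar matrices, and A ∈ K not scalar. Then for each i = 1,…,p, the i-th rows of the matrices I, A, A², …, A^{p-1} form a basis of F^p (equivalently, they are linearly independent over F). -/

import Mathlib

/-!
Every nonzero element of `K` is invertible, so `K` has no zero divisors and the minimal
polynomial of `A` is irreducible. Then `F^p` is a vector space over the field
`F[X] ⧸ (minpoly A)`, so `deg (minpoly A)` divides `p`; it is not `1` because `A` is not scalar,
hence it is `p`, and `I, A, …, A^{p-1}` are linearly independent. A nonzero `F`-combination
of them lies in `K`, hence is invertible and has no zero row: taking `i`-th rows is injective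
on their span, so the rows stay independent, and `p` independent vectors span `F^p`.
-/

open Polynomial

section
variable {F R : Type*} [Field F] [Ring R] [Algebra F R] {S : Subalgebra F R}

theorem Subalgebra.noZeroDivisors_of_isUnit (hS : ∀ x ∈ S, x ≠ 0 → IsUnit x) :
    NoZeroDivisors S where
  eq_zero_or_eq_zero_of_mul_eq_zero {a b} hab := by
    refine or_iff_not_imp_left.mpr fun ha => Subtype.ext ?_
    have ha' : (a : R) ≠ 0 := by simpa using ha
    exact ((hS a a.2 ha').mul_right_eq_zero).mp (congrArg Subtype.val hab)

theorem minpoly.irreducible_of_mem_of_isUnit [Nontrivial R] (hS : ∀ x ∈ S, x ≠ 0 → IsUnit x)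
    {x : R} (hx : x ∈ S) (hint : IsIntegral F x) : Irreducible (minpoly F x) := by
  have := Subalgebra.noZeroDivisors_of_isUnit hS
  have := NoZeroDivisors.to_isDomain S
  rw [show x = S.val ⟨x, hx⟩ from rfl, minpoly.algHom_eq S.val Subtype.val_injective]
  exact minpoly.irreducible ((isIntegral_algHom_iff S.val Subtype.val_injective).mp hint)

end

theorem Module.End.natDegree_minpoly_dvd_finrank {F V : Type*} [Field F] [AddCommGroup V]
    [Module F V] (f : Module.End F V) (hf : Irreducible (minpoly F f)) :
    (minpoly F f).natDegree ∣ Module.finrank F V := by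
  have : Fact (Irreducible (minpoly F f)) := ⟨hf⟩
  let φ : AdjoinRoot (minpoly F f) →ₐ[F] Module.End F V :=
    Ideal.Quotient.liftₐ _ (aeval f) fun q hq => by
      obtain ⟨r, rfl⟩ := Ideal.mem_span_singleton'.mp hq
      simp
  let : Module (AdjoinRoot (minpoly F f)) V := Module.compHom V φ.toRingHom
  have : IsScalarTower F (AdjoinRoot (minpoly F f)) V :=
    ⟨fun c l v => by show φ (c • l) v = c • φ l v; rw [map_smul]; rfl⟩
  rw [← finrank_quotient_span_eq_natDegree]
  exact Dvd.intro _ (Module.finrank_mul_finrank F (AdjoinRoot (minpoly F f)) V)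

theorem Matrix.natDegree_minpoly_eq_card_of_prime {n F : Type*} [Fintype n] [DecidableEq n]
    [Field F] (hn : (Fintype.card n).Prime) {A : Matrix n n F} (hA : Irreducible (minpoly F A))
    (hA_scalar : A ∉ Set.range (algebraMap F (Matrix n n F))) :
    (minpoly F A).natDegree = Fintype.card n := by
  have : Nonempty n := Fintype.card_pos_iff.mp hn.pos
  have hdvd := Module.End.natDegree_minpoly_dvd_finrank (toLin' A) (by rwa [minpoly_toLin'])
  rw [minpoly_toLin', Module.finrank_fintype_fun_eq_card] at hdvd
  exact (hn.eq_one_or_self_of_dvd _ hdvd).resolve_left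
    (mt minpoly.natDegree_eq_one_iff.mp hA_scalar)

theorem Matrix.row_ne_zero_of_isUnit {n R : Type*} [Fintype n] [DecidableEq n] [Ring R]
    [Nontrivial R] {M : Matrix n n R} (hM : IsUnit M) (i : n) : M i ≠ 0 := by
  intro hi
  obtain ⟨N, hMN, -⟩ := isUnit_iff_exists.mp hM
  have := congrFun (congrFun hMN i) i
  simp [Matrix.mul_apply, hi] at this

theorem Matrix.linearIndependent_pow_row {n F : Type*} [Fintype n] [DecidableEq n] [Field F]
    {S : Subalgebra F (Matrix n n F)} (hS : ∀ M ∈ S, M ≠ 0 → IsUnit M) {A : Matrix n n F}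
    (hA : A ∈ S) (i : n) :
    LinearIndependent F fun k : Fin (minpoly F A).natDegree => (A ^ (k : ℕ)) i := by
  have hspan : Submodule.span F (Set.range fun k : Fin (minpoly F A).natDegree => A ^ (k : ℕ))
      ≤ Subalgebra.toSubmodule S :=
    Submodule.span_le.mpr (Set.range_subset_iff.mpr fun k => S.pow_mem hA k)
  refine (linearIndependent_pow A).map (f := (LinearMap.proj i : Matrix n n F →ₗ[F] n → F)) ?_
  rw [Submodule.disjoint_def]
  intro M hM hMi
  by_contra hM0
  exact row_ne_zero_of_isUnit (hS M (hspan hM) hM0) i hMi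

theorem stmt_7_general (p : ℕ) (hp : p.Prime) (F : Type*) [Field F]
    (K : Subring (Matrix (Fin p) (Fin p) F))
    (hscalar : ∀ c : F, algebraMap F (Matrix (Fin p) (Fin p) F) c ∈ K)
    (hdiv : ∀ x ∈ K, x ≠ 0 → ∃ y ∈ K, x * y = 1 ∧ y * x = 1)
    (A : Matrix (Fin p) (Fin p) F) (hA : A ∈ K)
    (hAs : A ∉ Set.range (algebraMap F (Matrix (Fin p) (Fin p) F))) :
    ∀ i : Fin p,
      LinearIndependent F (fun k : Fin p => (A ^ (k : ℕ)) i) ∧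
      Submodule.span F (Set.range fun k : Fin p => (A ^ (k : ℕ)) i) = ⊤ := by
  let S : Subalgebra F (Matrix (Fin p) (Fin p) F) := { K with algebraMap_mem' := hscalar }
  have hS : ∀ M ∈ S, M ≠ 0 → IsUnit M := fun M hM hM0 =>
    let ⟨N, _, hMN, hNM⟩ := hdiv M hM hM0
    isUnit_iff_exists.mpr ⟨N, hMN, hNM⟩
  have : NeZero p := ⟨hp.ne_zero⟩
  have hdeg : (minpoly F A).natDegree = p := by
    simpa using Matrix.natDegree_minpoly_eq_card_of_prime (by simpa using hp)
      (minpoly.irreducible_of_mem_of_isUnit hS hA (IsIntegral.of_finite F A)) hAs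
  intro i
  have hind := Matrix.linearIndependent_pow_row hS hA i
  rw [hdeg] at hind
  exact ⟨hind, hind.span_eq_top_of_card_eq_finrank (by simp)⟩

/-- Let `p` be prime, `K` a division subring of `M_p(F)` properly containing the scalar
matrices, and `A ∈ K` not scalar.  Then for each `i`, the `i`-th rows of
`I, A, A², …, A^{p-1}` form a basis of `F^p`: they are linearly independent over `F`
and span `F^p`. -/
theorem stmt_7 (p : ℕ) (hp : p.Prime) (F : Type*) [Field F]
    (K : Subring (Matrix (Fin p) (Fin p) F))
    (hscalar : ∀ c : F, algebraMap F (Matrix (Fin p) (Fin p) F) c ∈ K)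
    (hproper : ∃ B ∈ K, B ∉ Set.range (algebraMap F (Matrix (Fin p) (Fin p) F)))
    (hdiv : ∀ x ∈ K, x ≠ 0 → ∃ y ∈ K, x * y = 1 ∧ y * x = 1)
    (A : Matrix (Fin p) (Fin p) F) (hA : A ∈ K)
    (hAs : A ∉ Set.range (algebraMap F (Matrix (Fin p) (Fin p) F))) :
    ∀ i : Fin p,
      LinearIndependent F (fun k : Fin p => (A ^ (k : ℕ)) i) ∧
      Submodule.span F (Set.range fun k : Fin p => (A ^ (k : ℕ)) i) = ⊤ :=
  stmt_7_general p hp F K hscalar hdiv A hA hAs
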